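/- Let G be a temporal graph and ℓ ≥ 0. The walks of length ℓ in the directed line graph expansion DL(G) are in one-to-one correspondence with the temporal walks of length ℓ+1 in G. -/

import Mathlib

/-- A temporal graph on vertex set `V`: undirected temporal edges `({u,v}, t)`
are encoded by a symmetric, irreflexive relation `edge u v t`. -/
structure TemporalGraph (V : Type*) where
  edge : V → V → ℕ → Prop
  symm : ∀ u v t, edge u v t → edge v u t
  irrefl : ∀ v t, ¬ edge v v t

variable {V : Type*}

/-- Vertices of the directed line graph expansion `DL(G)`: directed copies
`n^t_{uv→}` of the temporal edges of `G`. -/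
def TemporalGraph.DLVert (G : TemporalGraph V) : Type _ :=
  {p : V × V × ℕ // G.edge p.1 p.2.1 p.2.2}

/-- Adjacency in `DL(G)`: there is an edge from `n^t_{uv→}` to `n^s_{xy→}`
iff `v = x` and `t < s`. -/
def TemporalGraph.DLAdj (G : TemporalGraph V) (a b : G.DLVert) : Prop :=
  a.1.2.1 = b.1.1 ∧ a.1.2.2 < b.1.2.2

/-- Static walks of length `ℓ` in `DL(G)`. -/
def TemporalGraph.DLWalk (G : TemporalGraph V) (ℓ : ℕ) : Type _ :=
  {w : Fin (ℓ + 1) → G.DLVert // ∀ i : Fin ℓ, G.DLAdj (w i.castSucc) (w i.succ)}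

/-- Temporal walks of length `k` in `G`: `k+1` vertices and `k` strictly
increasing time stamps with consecutive vertices joined by temporal edges. -/
def TemporalGraph.TWalk (G : TemporalGraph V) (k : ℕ) : Type _ :=
  {p : (Fin (k + 1) → V) × (Fin k → ℕ) //
    (∀ i : Fin k, G.edge (p.1 i.castSucc) (p.1 i.succ) (p.2 i)) ∧ StrictMono p.2}

/-! A walk `a₀ → a₁ → ⋯ → a_ℓ` in `DL(G)` is a sequence of directed temporal edges
`aᵢ = n^{tᵢ}_{uᵢvᵢ→}` with `vᵢ = uᵢ₊₁` and `tᵢ < tᵢ₊₁`. Since heads and tails are glued,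
it is determined by the vertex sequence `u₀, v₀, v₁, …, v_ℓ` and the time stamps
`t₀ < ⋯ < t_ℓ`, which is exactly a temporal walk of length `ℓ + 1`; conversely, the
consecutive steps of a temporal walk are the arcs of a walk in `DL(G)`. -/

namespace TemporalGraph

variable {G : TemporalGraph V} {ℓ : ℕ}

namespace DLWalk

def vertices (w : G.DLWalk ℓ) : Fin (ℓ + 2) → V :=
  Fin.cons (w.1 0).1.1 fun i => (w.1 i).1.2.1

def times (w : G.DLWalk ℓ) : Fin (ℓ + 1) → ℕ :=
  fun i => (w.1 i).1.2.2

@[simp]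
lemma vertices_succ (w : G.DLWalk ℓ) (i : Fin (ℓ + 1)) : w.vertices i.succ = (w.1 i).1.2.1 :=
  Fin.cons_succ _ _ _

lemma vertices_castSucc (w : G.DLWalk ℓ) (i : Fin (ℓ + 1)) :
    w.vertices i.castSucc = (w.1 i).1.1 := by
  induction i using Fin.cases with
  | zero => rfl
  | succ j => rw [← Fin.succ_castSucc, vertices_succ]; exact (w.2 j).1

lemma times_strictMono (w : G.DLWalk ℓ) : StrictMono w.times :=
  Fin.strictMono_iff_lt_succ.2 fun i => (w.2 i).2

def toTWalk (w : G.DLWalk ℓ) : G.TWalk (ℓ + 1) :=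
  ⟨(w.vertices, w.times), fun i => by
    simpa only [vertices_castSucc, vertices_succ, times] using (w.1 i).2, w.times_strictMono⟩

end DLWalk

def TWalk.toDLWalk (p : G.TWalk (ℓ + 1)) : G.DLWalk ℓ :=
  ⟨fun i => ⟨(p.1.1 i.castSucc, p.1.1 i.succ, p.1.2 i), p.2.1 i⟩,
    fun i => ⟨congrArg p.1.1 (Fin.succ_castSucc i), p.2.2 (Fin.castSucc_lt_succ (i := i))⟩⟩

variable (G ℓ) in
def dlWalkEquivTWalk : G.DLWalk ℓ ≃ G.TWalk (ℓ + 1) where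
  toFun := DLWalk.toTWalk
  invFun := TWalk.toDLWalk
  left_inv w := Subtype.ext <| funext fun i =>
    Subtype.ext <| Prod.ext (w.vertices_castSucc i) rfl
  right_inv p := Subtype.ext <| Prod.ext (Fin.cons_self_tail p.1.1) rfl

end TemporalGraph

/-- The walks of length `ℓ` in `DL(G)` are in one-to-one correspondence with
the temporal walks of length `ℓ + 1` in `G`. -/
theorem dl_walks_equiv_temporal_walks (G : TemporalGraph V) (ℓ : ℕ) :
    Nonempty (G.DLWalk ℓ ≃ G.TWalk (ℓ + 1)) :=
  ⟨G.dlWalkEquivTWalk ℓ⟩
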